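/- Inconsistency of the self-training loss: for the squared loss ℓ_θ(x, y) = (θ − y)², the expected gradient of the self-training loss at the population minimizer θ* = E[Y_1] equals E[d/dθ L^SL(θ*)] = (2m/(m+n))·(E[Y_1] − E[f̂(X_1)]); in particular, its absolute value is at least |E[Y_1] − E[f̂(X_1)]| whenever m ≥ n, so θ* fails to be a critical point of the expected self-training loss whenever E[f̂(X_1)] ≠ E[Y_1]. -/

import Mathlib

open MeasureTheory ProbabilityTheory Finset

/-!
By linearity of expectation and identical distribution, each pseudo-labelled term of the
gradient has mean `θ - E[f̂(X₁)]` and each labelled term has mean `θ - E[Y₁]`. At `θ = E[Y₁]` the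
`n` labelled terms vanish in expectation, leaving `(2 / (m + n)) · m · (E[Y₁] - E[f̂(X₁)])`.
-/

theorem Fin.card_filter_le_val (m n : ℕ) : #{i : Fin (m + n) | m ≤ (i : ℕ)} = n := by
  have h := card_filter_add_card_filter_not (s := (univ : Finset (Fin (m + n))))
    (fun i => (i : ℕ) < m)
  simp only [Fin.card_filter_val_lt, not_lt, card_univ, Fintype.card_fin] at h
  omega

section Expectation

variable {Ω ι : Type*} [MeasurableSpace Ω] {μ : Measure Ω} [IsProbabilityMeasure μ]
  {g : ι → Ω → ℝ} {g₀ : Ω → ℝ}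

theorem integrable_const_sub_of_identDistrib (c : ℝ) (hg : ∀ i, IdentDistrib (g i) g₀ μ μ)
    (hg₀ : Integrable g₀ μ) (i : ι) : Integrable (fun ω => c - g i ω) μ :=
  (integrable_const c).sub ((hg i).integrable_iff.mpr hg₀)

theorem integral_sum_const_sub_of_identDistrib (s : Finset ι) (c : ℝ)
    (hg : ∀ i, IdentDistrib (g i) g₀ μ μ) (hg₀ : Integrable g₀ μ) :
    ∫ ω, ∑ i ∈ s, (c - g i ω) ∂μ = #s * (c - ∫ ω, g₀ ω ∂μ) := by
  have hterm : ∀ i ∈ s, ∫ ω, (c - g i ω) ∂μ = c - ∫ ω, g₀ ω ∂μ := fun i _ => by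
    rw [integral_sub (integrable_const c) ((hg i).integrable_iff.mpr hg₀), integral_const,
      (hg i).integral_eq, probReal_univ, one_smul]
  rw [integral_finsetSum s fun i _ => integrable_const_sub_of_identDistrib c hg hg₀ i,
    sum_congr rfl hterm, sum_const, nsmul_eq_mul]

end Expectation

/-- `d/dθ L^SL(θ)` at the sample `ω`: the first `m` indices carry the teacher's pseudo-labels
`f (X i)`, the last `n` the true labels `Y i`. -/
noncomputable def selfTrainingLossDeriv {Ω 𝒳 : Type*} (m n : ℕ) (f : 𝒳 → ℝ)
    (X : Fin (m + n) → Ω → 𝒳) (Y : Fin (m + n) → Ω → ℝ) (θ : ℝ) (ω : Ω) : ℝ :=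
  (2 / (m + n : ℝ)) *
    ((∑ i ∈ univ.filter (fun i : Fin (m + n) => (i : ℕ) < m), (θ - f (X i ω)))
      + ∑ i ∈ univ.filter (fun i : Fin (m + n) => m ≤ (i : ℕ)), (θ - Y i ω))

theorem integral_selfTrainingLossDeriv {Ω 𝒳 : Type*} [MeasurableSpace Ω] {μ : Measure Ω}
    [IsProbabilityMeasure μ] [MeasurableSpace 𝒳] {m n : ℕ} {f : 𝒳 → ℝ}
    {X : Fin (m + n) → Ω → 𝒳} {Y : Fin (m + n) → Ω → ℝ} (i₀ : Fin (m + n))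
    (h_ident : ∀ i, IdentDistrib (fun ω => (X i ω, Y i ω)) (fun ω => (X i₀ ω, Y i₀ ω)) μ μ)
    (hf : Measurable f) (hY : Integrable (Y i₀) μ) (hfX : Integrable (fun ω => f (X i₀ ω)) μ)
    (θ : ℝ) :
    ∫ ω, selfTrainingLossDeriv m n f X Y θ ω ∂μ
      = 2 / (m + n : ℝ) * (m * (θ - ∫ ω, f (X i₀ ω) ∂μ) + n * (θ - ∫ ω, Y i₀ ω ∂μ)) := by
  have hfX_ident : ∀ i, IdentDistrib (fun ω => f (X i ω)) (fun ω => f (X i₀ ω)) μ μ :=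
    fun i => (h_ident i).comp (hf.comp measurable_fst)
  have hY_ident : ∀ i, IdentDistrib (Y i) (Y i₀) μ μ := fun i => (h_ident i).comp measurable_snd
  unfold selfTrainingLossDeriv
  rw [integral_const_mul,
    integral_add
      (integrable_finsetSum _ fun i _ => integrable_const_sub_of_identDistrib θ hfX_ident hfX i)
      (integrable_finsetSum _ fun i _ => integrable_const_sub_of_identDistrib θ hY_ident hY i),
    integral_sum_const_sub_of_identDistrib _ θ hfX_ident hfX,
    integral_sum_const_sub_of_identDistrib _ θ hY_ident hY,
    Fin.card_filter_val_lt, min_eq_right (Nat.le_add_right m n), Fin.card_filter_le_val]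

theorem one_le_two_mul_div_add {m n : ℕ} (hm : 0 < m) (hnm : n ≤ m) :
    1 ≤ 2 * (m : ℝ) / (m + n) := by
  rw [one_le_div (by positivity)]
  exact_mod_cast (by omega : m + n ≤ 2 * m)

theorem abs_le_abs_mul_of_one_le {a : ℝ} (ha : 1 ≤ a) (x : ℝ) : |x| ≤ |a * x| := by
  rw [abs_mul]
  exact le_mul_of_one_le_left (abs_nonneg x) (ha.trans (le_abs_self a))

/-- Inconsistency of the self-training loss: for the squared loss, the expected gradient of
the self-training loss at the population minimizer `θ* = E[Y₁]` equals
`(2m/(m+n))·(E[Y₁] − E[f̂(X₁)])`; its absolute value is at least `|E[Y₁] − E[f̂(X₁)]|`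
whenever `m ≥ n`, so `θ*` fails to be a critical point of the expected self-training loss
whenever `E[f̂(X₁)] ≠ E[Y₁]`. -/
theorem self_training_loss_gradient_inconsistent
    {Ω : Type*} [MeasurableSpace Ω] (μ : Measure Ω) [IsProbabilityMeasure μ]
    {𝒳 : Type*} [MeasurableSpace 𝒳]
    (m n : ℕ) (hm : 0 < m)
    (X : Fin (m + n) → Ω → 𝒳) (Y : Fin (m + n) → Ω → ℝ)
    (h_ident : ∀ i : Fin (m + n),
      IdentDistrib (fun ω => (X i ω, Y i ω))
        (fun ω => (X ⟨0, by omega⟩ ω, Y ⟨0, by omega⟩ ω)) μ μ)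
    (f : 𝒳 → ℝ) (hf : Measurable f)
    (hY2 : MemLp (Y ⟨0, by omega⟩) 2 μ)
    (hfX2 : MemLp (fun ω => f (X ⟨0, by omega⟩ ω)) 2 μ) :
    (∫ ω, ((2 / (m + n : ℝ)) *
          ((∑ i ∈ Finset.univ.filter (fun i : Fin (m + n) => (i : ℕ) < m),
              ((∫ ω', Y ⟨0, by omega⟩ ω' ∂μ) - f (X i ω)))
            + ∑ i ∈ Finset.univ.filter (fun i : Fin (m + n) => m ≤ (i : ℕ)),
              ((∫ ω', Y ⟨0, by omega⟩ ω' ∂μ) - Y i ω))) ∂μ)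
      = (2 * (m : ℝ) / (m + n : ℝ)) *
          ((∫ ω, Y ⟨0, by omega⟩ ω ∂μ) - ∫ ω, f (X ⟨0, by omega⟩ ω) ∂μ) ∧
    (n ≤ m →
      |(∫ ω, Y ⟨0, by omega⟩ ω ∂μ) - ∫ ω, f (X ⟨0, by omega⟩ ω) ∂μ|
        ≤ |∫ ω, ((2 / (m + n : ℝ)) *
            ((∑ i ∈ Finset.univ.filter (fun i : Fin (m + n) => (i : ℕ) < m),
                ((∫ ω', Y ⟨0, by omega⟩ ω' ∂μ) - f (X i ω)))
              + ∑ i ∈ Finset.univ.filter (fun i : Fin (m + n) => m ≤ (i : ℕ)),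
                ((∫ ω', Y ⟨0, by omega⟩ ω' ∂μ) - Y i ω))) ∂μ|) ∧
    ((∫ ω, f (X ⟨0, by omega⟩ ω) ∂μ) ≠ (∫ ω, Y ⟨0, by omega⟩ ω ∂μ) →
      (∫ ω, ((2 / (m + n : ℝ)) *
          ((∑ i ∈ Finset.univ.filter (fun i : Fin (m + n) => (i : ℕ) < m),
              ((∫ ω', Y ⟨0, by omega⟩ ω' ∂μ) - f (X i ω)))
            + ∑ i ∈ Finset.univ.filter (fun i : Fin (m + n) => m ≤ (i : ℕ)),
              ((∫ ω', Y ⟨0, by omega⟩ ω' ∂μ) - Y i ω))) ∂μ) ≠ 0) := by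
  set θ := ∫ ω, Y ⟨0, by omega⟩ ω ∂μ
  have hgrad : ∫ ω, selfTrainingLossDeriv m n f X Y θ ω ∂μ
      = 2 * (m : ℝ) / (m + n) * (θ - ∫ ω, f (X ⟨0, by omega⟩ ω) ∂μ) := by
    rw [integral_selfTrainingLossDeriv _ h_ident hf (hY2.integrable one_le_two)
      (hfX2.integrable one_le_two), sub_self, mul_zero, add_zero]
    ring
  unfold selfTrainingLossDeriv at hgrad
  refine ⟨hgrad, fun hnm => ?_, fun hne => ?_⟩
  · exact hgrad ▸ abs_le_abs_mul_of_one_le (one_le_two_mul_div_add hm hnm) _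
  · rw [hgrad]
    exact mul_ne_zero (by positivity) (sub_ne_zero.mpr hne.symm)
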